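/- Let p ≥ 3 be an integer and set σ₁ = (1 − cos(2π/p))/sin(2π/p). Then {r ∈ S³ : ⟨u_1, r⟩ = 0 and ⟨u_j, r⟩ > 0 for all j ∈ {2,…,p−1}} = {r ∈ S³ : r₁ = σ₁·r₀ and r₀ > 0}, and {r ∈ S³ : ⟨u_{p−1}, r⟩ = 0 and ⟨u_j, r⟩ > 0 for all j ∈ {1,…,p−2}} = {r ∈ S³ : r₁ = −σ₁·r₀ and r₀ > 0}. -/

import Mathlib

open scoped RealInnerProductSpace

/-- The vector `u_k = (1 - cos(2πk/p), -sin(2πk/p), 0, 0) ∈ ℝ⁴`. -/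
noncomputable def uvec (p k : ℕ) : EuclideanSpace ℝ (Fin 4) :=
  WithLp.toLp 2 ![1 - Real.cos (2 * Real.pi * (k : ℝ) / (p : ℝ)),
    -Real.sin (2 * Real.pi * (k : ℝ) / (p : ℝ)), 0, 0]

/-!
With `θ = π/p`, half-angle formulas give `⟨u_k, r⟩ = 2 sin(kθ) (sin(kθ) r₀ - cos(kθ) r₁)`, and
`sin(kθ) > 0` for `0 < k < p`, so only the sign of the linear form `sin α · r₀ - cos α · r₁` at
`α = kθ` matters. On the line where this form vanishes for `α = φ` (i.e. `r₁ = tan φ · r₀`),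
multiplying it at any other `α` by `cos φ` gives `r₀ sin(α - φ)`; for the two boundary strata
(`φ = θ`, resp. `φ = -θ`, the form at `(p-1)θ = π - θ` being the negative of that at `-θ`) all the
angles `α - φ` lie in `(0, π)`, so the remaining inequalities all say `r₀ > 0`.
-/

open Real

/-- Where `sin x` or `cos x` vanishes, both sides are `0` by the convention `a / 0 = 0`. -/
theorem Real.one_sub_cos_two_mul_div_sin_two_mul (x : ℝ) :
    (1 - cos (2 * x)) / sin (2 * x) = tan x := by
  rw [cos_two_mul', sin_two_mul, tan_eq_sin_div_cos]
  rcases eq_or_ne (sin x) 0 with hs | hs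
  · simp [hs]
  rcases eq_or_ne (cos x) 0 with hc | hc
  · simp [hc]
  field_simp
  linear_combination (-1) * sin_sq_add_cos_sq x

theorem Real.sin_pi_mul_div_pos {k p : ℕ} (hk : 0 < k) (hkp : k < p) :
    0 < sin (π * k / p) := by
  have hk' : (0 : ℝ) < k := by exact_mod_cast hk
  have hkp' : (k : ℝ) < p := by exact_mod_cast hkp
  apply sin_pos_of_pos_of_lt_pi (div_pos (mul_pos pi_pos hk') (hk'.trans hkp'))
  rw [div_lt_iff₀ (hk'.trans hkp')]
  nlinarith [pi_pos]

theorem Real.cos_pi_div_pos {p : ℕ} (hp : 2 < p) : 0 < cos (π / p) := by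
  have hp' : (2 : ℝ) < p := by exact_mod_cast hp
  have hθ : 0 < π / p := div_pos pi_pos (by linarith)
  apply cos_pos_of_mem_Ioo ⟨by linarith [pi_pos], ?_⟩
  rw [div_lt_div_iff₀ (by linarith) two_pos]
  nlinarith [pi_pos]

theorem sin_add_pi_mul_sub_cos_add_pi_mul (α x y : ℝ) :
    sin (α + π) * x - cos (α + π) * y = -(sin α * x - cos α * y) := by
  rw [sin_add_pi, cos_add_pi]
  ring

theorem sin_mul_sub_cos_mul_eq_zero_and_forall_pos_iff {ι : Type*} {P : ι → Prop}
    {φ x y : ℝ} (α : ι → ℝ) (hφ : 0 < cos φ) (hP : ∃ i, P i)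
    (hα : ∀ i, P i → 0 < sin (α i - φ)) :
    (sin φ * x - cos φ * y = 0 ∧ ∀ i, P i → 0 < sin (α i) * x - cos (α i) * y) ↔
      y = tan φ * x ∧ 0 < x := by
  have hline : sin φ * x - cos φ * y = 0 ↔ y = tan φ * x := by
    rw [tan_eq_sin_div_cos]
    constructor <;> intro h
    · field_simp
      linarith
    · rw [h]
      field_simp
      ring
  rw [hline, and_congr_right_iff]
  intro hy
  have hcos_mul : ∀ i, cos φ * (sin (α i) * x - cos (α i) * y) = x * sin (α i - φ) := by
    intro i
    rw [hy, tan_eq_sin_div_cos, sin_sub]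
    field_simp
  obtain ⟨i₀, hi₀⟩ := hP
  constructor
  · intro h
    exact pos_of_mul_pos_left (hcos_mul i₀ ▸ mul_pos hφ (h i₀ hi₀)) (hα i₀ hi₀).le
  · intro hx i hi
    exact pos_of_mul_pos_right (hcos_mul i ▸ mul_pos hx (hα i hi)) hφ.le

section uvec

variable {p k : ℕ}

theorem inner_uvec (r : EuclideanSpace ℝ (Fin 4)) :
    ⟪uvec p k, r⟫ = 2 * sin (π * k / p) * (sin (π * k / p) * r 0 - cos (π * k / p) * r 1) := by
  have h2 : 2 * π * k / p = 2 * (π * k / p) := by ring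
  simp only [uvec, PiLp.inner_apply, RCLike.inner_apply, conj_trivial, Fin.sum_univ_four,
    Matrix.cons_val_zero, Matrix.cons_val_one, Matrix.cons_val_two,
    Matrix.cons_val_three, Matrix.head_cons, Matrix.tail_cons, h2, sin_two_mul, cos_two_mul']
  linear_combination (-r 0) * sin_sq_add_cos_sq (π * k / p)

theorem inner_uvec_eq_zero_iff (hk : 0 < k) (hkp : k < p) (r : EuclideanSpace ℝ (Fin 4)) :
    ⟪uvec p k, r⟫ = 0 ↔ sin (π * k / p) * r 0 - cos (π * k / p) * r 1 = 0 := by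
  rw [inner_uvec, mul_eq_zero_iff_left (by positivity [sin_pi_mul_div_pos hk hkp])]

theorem inner_uvec_pos_iff (hk : 0 < k) (hkp : k < p) (r : EuclideanSpace ℝ (Fin 4)) :
    0 < ⟪uvec p k, r⟫ ↔ 0 < sin (π * k / p) * r 0 - cos (π * k / p) * r 1 := by
  rw [inner_uvec, mul_pos_iff_of_pos_left (by positivity [sin_pi_mul_div_pos hk hkp])]

theorem inner_uvec_one_eq_zero_and_forall_pos_iff (hp : 2 < p) (r : EuclideanSpace ℝ (Fin 4)) :
    (⟪uvec p 1, r⟫ = 0 ∧ ∀ j : ℕ, 2 ≤ j → j ≤ p - 1 → 0 < ⟪uvec p j, r⟫) ↔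
      r 1 = tan (π / p) * r 0 ∧ 0 < r 0 := by
  have key := sin_mul_sub_cos_mul_eq_zero_and_forall_pos_iff (x := r 0) (y := r 1)
    (P := fun j : ℕ => 2 ≤ j ∧ j ≤ p - 1) (fun j => π * j / p) (cos_pi_div_pos hp)
    ⟨2, le_rfl, by omega⟩ fun j hj => by
      rw [show π * j / p - π / p = π * (j - 1 : ℕ) / p by rw [Nat.cast_sub (by omega)]; ring]
      exact sin_pi_mul_div_pos (by omega) (by omega)
  simp only [and_imp] at key
  rw [← key, inner_uvec_eq_zero_iff one_pos (by omega), Nat.cast_one, mul_one]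
  exact and_congr_right fun _ =>
    forall₃_congr fun j _ _ => inner_uvec_pos_iff (by omega) (by omega) r

theorem inner_uvec_sub_one_eq_zero_and_forall_pos_iff (hp : 2 < p)
    (r : EuclideanSpace ℝ (Fin 4)) :
    (⟪uvec p (p - 1), r⟫ = 0 ∧ ∀ j : ℕ, 1 ≤ j → j ≤ p - 2 → 0 < ⟪uvec p j, r⟫) ↔
      r 1 = -tan (π / p) * r 0 ∧ 0 < r 0 := by
  have key := sin_mul_sub_cos_mul_eq_zero_and_forall_pos_iff (x := r 0) (y := r 1)
    (P := fun j : ℕ => 1 ≤ j ∧ j ≤ p - 2) (fun j => π * j / p) (φ := -(π / p))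
    (by rw [cos_neg]; exact cos_pi_div_pos hp) ⟨1, le_rfl, by omega⟩ fun j hj => by
      rw [show π * j / p - -(π / p) = π * (j + 1 : ℕ) / p by push_cast; ring]
      exact sin_pi_mul_div_pos (by omega) (by omega)
  simp only [and_imp] at key
  have hangle : π * (p - 1 : ℕ) / p = -(π / p) + π := by
    rw [Nat.cast_sub (by omega)]
    field_simp
    ring
  rw [← tan_neg, ← key, inner_uvec_eq_zero_iff (by omega) (by omega), hangle,
    sin_add_pi_mul_sub_cos_add_pi_mul, neg_eq_zero]
  exact and_congr_right fun _ =>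
    forall₃_congr fun j _ _ => inner_uvec_pos_iff (by omega) (by omega) r

end uvec

/-- For `p ≥ 3` and `σ₁ = (1 - cos(2π/p))/sin(2π/p)`, the stratum
`D^{(1)}_1` equals `{r ∈ S³ | r₁ = σ₁ r₀, r₀ > 0}` and the stratum `D^{(1)}_{p-1}` equals
`{r ∈ S³ | r₁ = -σ₁ r₀, r₀ > 0}`. -/
theorem stmt4 (p : ℕ) (hp : 3 ≤ p) (σ₁ : ℝ)
    (hσ : σ₁ = (1 - Real.cos (2 * Real.pi / (p : ℝ))) / Real.sin (2 * Real.pi / (p : ℝ))) :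
    ({r : EuclideanSpace ℝ (Fin 4) | ‖r‖ = 1 ∧ ⟪uvec p 1, r⟫ = 0 ∧
        ∀ j : ℕ, 2 ≤ j → j ≤ p - 1 → 0 < ⟪uvec p j, r⟫} =
      {r : EuclideanSpace ℝ (Fin 4) | ‖r‖ = 1 ∧ r 1 = σ₁ * r 0 ∧ 0 < r 0}) ∧
    ({r : EuclideanSpace ℝ (Fin 4) | ‖r‖ = 1 ∧ ⟪uvec p (p - 1), r⟫ = 0 ∧
        ∀ j : ℕ, 1 ≤ j → j ≤ p - 2 → 0 < ⟪uvec p j, r⟫} =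
      {r : EuclideanSpace ℝ (Fin 4) | ‖r‖ = 1 ∧ r 1 = -σ₁ * r 0 ∧ 0 < r 0}) := by
  have hσ₁ : σ₁ = tan (π / p) := by
    rw [hσ, mul_div_assoc, one_sub_cos_two_mul_div_sin_two_mul]
  subst hσ₁
  exact ⟨Set.ext fun r => and_congr_right fun _ =>
      inner_uvec_one_eq_zero_and_forall_pos_iff hp r,
    Set.ext fun r => and_congr_right fun _ =>
      inner_uvec_sub_one_eq_zero_and_forall_pos_iff hp r⟩
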